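/- Let G be a 2-edge-connected multigraph and H a proper induced subgraph of G. Let k be the number of edges of G adjacent to H but not contained in H. Then #l(H^Br) ≤ k. -/

import Mathlib

/-- A finite multigraph: loops and parallel edges allowed. -/
structure Multigraph where
  V : Type
  E : Type
  finV : Finite V
  finE : Finite E
  src : E → V
  tgt : E → V

namespace Multigraph

attribute [instance] Multigraph.finV Multigraph.finE

variable (G : Multigraph)

/-- Adjacency using only edges in `S`. -/
def Adj (S : Set G.E) (u v : G.V) : Prop :=
  ∃ e ∈ S, (G.src e = u ∧ G.tgt e = v) ∨ (G.src e = v ∧ G.tgt e = u)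

/-- Reachability using only edges in `S`. -/
def ReachOn (S : Set G.E) : G.V → G.V → Prop :=
  Relation.ReflTransGen (G.Adj S)

/-- Reachability in `G`. -/
def Reach : G.V → G.V → Prop := G.ReachOn Set.univ

def Connected : Prop := Nonempty G.V ∧ ∀ u v : G.V, G.Reach u v

/-- An edge is a bridge iff its removal disconnects its endpoints. -/
def IsBridge (e : G.E) : Prop := ¬ G.ReachOn {f | f ≠ e} (G.src e) (G.tgt e)

def TwoEdgeConnected : Prop := G.Connected ∧ ∀ e : G.E, ¬ G.IsBridge e

/-- The graph `G^Br` obtained by contracting all non-bridge edges: its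
vertices are the 2-edge-connected components of `G`, its edges the bridges. -/
def Br : Multigraph where
  V := Quot (G.ReachOn {e | ¬ G.IsBridge e})
  E := {e : G.E // G.IsBridge e}
  finV := Finite.of_surjective _ Quot.exists_rep
  finE := Subtype.finite
  src e := Quot.mk _ (G.src e.1)
  tgt e := Quot.mk _ (G.tgt e.1)

/-- Number of edges adjacent to a vertex (loops counted once; used only
for forests, which have no loops). -/
noncomputable def degAt (v : G.V) : ℕ := {e : G.E | G.src e = v ∨ G.tgt e = v}.ncard

/-- Leaf count of a forest, with the convention that an isolated vertex
(a single-vertex tree) counts as `2` leaves. -/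
noncomputable def numLeaves : ℕ :=
  2 * {v : G.V | G.degAt v = 0}.ncard + {v : G.V | G.degAt v = 1}.ncard

/-- The induced subgraph on a set of vertices. -/
def induce (W : Set G.V) : Multigraph where
  V := W
  E := {e : G.E // G.src e ∈ W ∧ G.tgt e ∈ W}
  finV := Subtype.finite
  finE := Subtype.finite
  src e := ⟨G.src e.1, e.2.1⟩
  tgt e := ⟨G.tgt e.1, e.2.2⟩

/-- Deletion of an edge. -/
def deleteEdge (e : G.E) : Multigraph where
  V := G.V
  E := {f : G.E // f ≠ e}
  finV := G.finV
  finE := Subtype.finite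
  src f := G.src f.1
  tgt f := G.tgt f.1

/-- Valence of a vertex, loops counted twice. -/
noncomputable def valence (v : G.V) : ℕ :=
  {e : G.E | G.src e = v}.ncard + {e : G.E | G.tgt e = v}.ncard

/-- Number of edges joining `w` to the set `S` (for `w ∉ S`). -/
noncomputable def edgesTo (w : G.V) (S : Set G.V) : ℕ :=
  {e : G.E | (G.src e = w ∧ G.tgt e ∈ S) ∨ (G.tgt e = w ∧ G.src e ∈ S)}.ncard

/-- The Dhar subgraph `Dh(v, d)`: the smallest set of vertices containing `v`
that is closed under adding a vertex `w` whenever `d w` is smaller than the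
number of edges joining `w` to the set. -/
def dhar (d : G.V → ℤ) (v : G.V) : Set G.V :=
  ⋂₀ {S : Set G.V | v ∈ S ∧ ∀ w ∉ S, (G.edgesTo w S : ℤ) ≤ d w}

end Multigraph

/-- A vertex-weighted finite multigraph. -/
structure WGraph extends Multigraph where
  weight : V → ℕ

namespace WGraph

variable (G : WGraph)

/-- The genus `1 - |V| + |E| + Σ_v g_v`. -/
noncomputable def genus : ℤ :=
  1 - (Nat.card G.V : ℤ) + Nat.card G.E + ∑ᶠ v : G.V, (G.weight v : ℤ)

def Semistable : Prop := ∀ v : G.V, G.weight v = 0 → 2 ≤ G.toMultigraph.valence v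

def Stable : Prop := ∀ v : G.V,
  (G.weight v = 0 → 3 ≤ G.toMultigraph.valence v) ∧
  (G.weight v = 1 → 1 ≤ G.toMultigraph.valence v)

/-- Induced weighted subgraph. -/
def induce (W : Set G.V) : WGraph :=
  { G.toMultigraph.induce W with weight := fun v => G.weight v.1 }

/-- The genus of the induced subgraph on `W`:
`|E(W)| - |W| + c(W) + Σ_{v ∈ W} g_v`. -/
noncomputable def genusOf (W : Set G.V) : ℤ :=
  (Nat.card (G.toMultigraph.induce W).E : ℤ) - Nat.card W
    + Nat.card (Quot (G.toMultigraph.induce W).Reach)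
    + ∑ᶠ v ∈ W, (G.weight v : ℤ)

end WGraph

/-! Let `C` be the vertex set of a 2-edge-connected component `c` of `H = G.induce W`. It is
nonempty and proper, so by 2-edge-connectivity at least two edges of `G` cross it; each is either
a bridge of `H` at `c` or an edge from `c` to the outside of `W`. Hence `c` sends at least
`2 - deg c` edges out of `W`, and summing over the components (whose outgoing edge sets are
disjoint) gives `#l(H^Br) = ∑ (2 - deg c) ≤ k`. -/

namespace Multigraph

variable (G : Multigraph)

def cut (C : Set G.V) : Set G.E := {e | ¬(G.src e ∈ C ↔ G.tgt e ∈ C)}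

def toBr (v : G.V) : G.Br.V := Quot.mk _ v

def componentVerts (W : Set G.V) (c : (G.induce W).Br.V) : Set G.V :=
  {v | ∃ h : v ∈ W, (G.induce W).toBr ⟨v, h⟩ = c}

variable {G}

instance (S : Set G.E) : Std.Symm (G.Adj S) where
  symm _ _ := fun ⟨e, he, h⟩ => ⟨e, he, h.symm⟩

theorem ReachOn.symm {S : Set G.E} {u v : G.V} (h : G.ReachOn S u v) : G.ReachOn S v u :=
  Relation.ReflTransGen.stdSymm.symm _ _ h

theorem ReachOn.exists_mem_cut {S : Set G.E} {C : Set G.V} {u v : G.V}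
    (h : G.ReachOn S u v) (hu : u ∈ C) (hv : v ∉ C) : ∃ e ∈ S, e ∈ G.cut C := by
  induction h with
  | refl => exact absurd hu hv
  | @tail b c _ hbc ih =>
    by_cases hb : b ∈ C
    · obtain ⟨e, he, ⟨rfl, rfl⟩ | ⟨rfl, rfl⟩⟩ := hbc
      · exact ⟨e, he, fun h => hv (h.1 hb)⟩
      · exact ⟨e, he, fun h => hv (h.2 hb)⟩
    · exact ih hb

theorem ReachOn.exists_mem_cut_of_not_iff {S : Set G.E} {C : Set G.V} {u v : G.V}
    (h : G.ReachOn S u v) (huv : ¬(u ∈ C ↔ v ∈ C)) : ∃ e ∈ S, e ∈ G.cut C := by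
  by_cases hu : u ∈ C
  · exact h.exists_mem_cut hu fun hv => huv ⟨fun _ => hv, fun _ => hu⟩
  · exact h.symm.exists_mem_cut (by tauto) hu

/-- Removing a cut edge `e` leaves a path between its endpoints, which must cross the cut
again through another edge. -/
theorem TwoEdgeConnected.one_lt_ncard_cut (hG : G.TwoEdgeConnected) {C : Set G.V}
    (hne : C.Nonempty) (hC : C ≠ Set.univ) : 1 < (G.cut C).ncard := by
  obtain ⟨u, hu⟩ := hne
  obtain ⟨v, hv⟩ := (Set.ne_univ_iff_exists_notMem C).mp hC
  obtain ⟨e, -, he⟩ := (hG.1.2 u v).exists_mem_cut hu hv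
  have hreach : G.ReachOn {f | f ≠ e} (G.src e) (G.tgt e) := not_not.mp (hG.2 e)
  obtain ⟨f, hfe, hf⟩ := hreach.exists_mem_cut_of_not_iff he
  exact (Set.one_lt_ncard (Set.toFinite _)).mpr ⟨e, he, f, hf, Ne.symm hfe⟩

theorem toBr_src_eq_toBr_tgt {e : G.E} (he : ¬G.IsBridge e) :
    G.toBr (G.src e) = G.toBr (G.tgt e) :=
  Quot.sound (.single ⟨e, he, .inl ⟨rfl, rfl⟩⟩)

theorem numLeaves_eq_sum [Fintype G.V] : G.numLeaves = ∑ v, (2 - G.degAt v) := by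
  classical
  have h (v : G.V) : 2 - G.degAt v = 2 * (if G.degAt v = 0 then 1 else 0) +
      (if G.degAt v = 1 then 1 else 0) := by
    split_ifs <;> omega
  simp only [h, Finset.sum_add_distrib, ← Finset.mul_sum, Finset.sum_boole, numLeaves,
    Set.ncard_eq_toFinset_card', Set.toFinset_ofPred, Nat.cast_id]

section Induced

open Function

variable {W : Set G.V}

theorem mem_componentVerts_iff {c : (G.induce W).Br.V} {v : G.V} (hv : v ∈ W) :
    v ∈ G.componentVerts W c ↔ (G.induce W).toBr ⟨v, hv⟩ = c :=
  ⟨fun ⟨_, h⟩ => h, fun h => ⟨hv, h⟩⟩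

theorem componentVerts_subset (c : (G.induce W).Br.V) : G.componentVerts W c ⊆ W :=
  fun _ ⟨hv, _⟩ => hv

theorem componentVerts_nonempty (c : (G.induce W).Br.V) :
    (G.componentVerts W c).Nonempty := by
  obtain ⟨v, rfl⟩ := Quot.exists_rep c
  exact ⟨v.1, v.2, rfl⟩

theorem eq_of_mem_componentVerts {c d : (G.induce W).Br.V} {v : G.V}
    (hc : v ∈ G.componentVerts W c) (hd : v ∈ G.componentVerts W d) : c = d := by
  obtain ⟨hv, rfl⟩ := hc
  exact (mem_componentVerts_iff hv).mp hd

/-- An edge of `G` leaving a component of `(G.induce W)^Br` either leaves `W` or is an edge of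
`G.induce W` joining two different components, hence a bridge of it. -/
theorem cut_componentVerts_subset (c : (G.induce W).Br.V) :
    G.cut (G.componentVerts W c) ⊆ (G.cut (G.componentVerts W c) ∩ G.cut W) ∪
      (fun b => b.1.1) '' {b | (G.induce W).Br.src b = c ∨ (G.induce W).Br.tgt b = c} := by
  intro e he
  by_cases heW : e ∈ G.cut W
  · exact .inl ⟨he, heW⟩
  have hs : G.src e ∈ W ∧ G.tgt e ∈ W := by
    have := componentVerts_subset c (a := G.src e)
    have := componentVerts_subset c (a := G.tgt e)
    simp only [cut, Set.mem_ofPred_eq] at he heW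
    tauto
  rw [cut, Set.mem_ofPred_eq, mem_componentVerts_iff hs.1, mem_componentVerts_iff hs.2] at he
  have hbridge : (G.induce W).IsBridge ⟨e, hs⟩ := by
    by_contra hnb
    have hsame : (G.induce W).toBr ⟨G.src e, hs.1⟩ = (G.induce W).toBr ⟨G.tgt e, hs.2⟩ :=
      toBr_src_eq_toBr_tgt hnb
    exact he (by rw [hsame])
  have hincident :
      (G.induce W).toBr ⟨G.src e, hs.1⟩ = c ∨ (G.induce W).toBr ⟨G.tgt e, hs.2⟩ = c := by
    tauto
  exact .inr ⟨⟨⟨e, hs⟩, hbridge⟩, hincident, rfl⟩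

theorem two_sub_degAt_le_ncard_cut_inter (hG : G.TwoEdgeConnected) (hW : W ≠ Set.univ)
    (c : (G.induce W).Br.V) :
    2 - (G.induce W).Br.degAt c ≤ (G.cut (G.componentVerts W c) ∩ G.cut W).ncard := by
  have hproper : G.componentVerts W c ≠ Set.univ := fun h =>
    hW (Set.eq_univ_of_univ_subset (h ▸ componentVerts_subset c))
  have hcut := hG.one_lt_ncard_cut (componentVerts_nonempty c) hproper
  have := (Set.ncard_le_ncard (cut_componentVerts_subset c)).trans (Set.ncard_union_le _ _)
  have : ((fun b : (G.induce W).Br.E => b.1.1) ''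
      {b | (G.induce W).Br.src b = c ∨ (G.induce W).Br.tgt b = c}).ncard ≤
      (G.induce W).Br.degAt c :=
    Set.ncard_image_le (Set.toFinite _)
  omega

theorem pairwise_disjoint_cut_componentVerts_inter :
    Pairwise (Disjoint on
      (fun c : (G.induce W).Br.V => G.cut (G.componentVerts W c) ∩ G.cut W)) := by
  intro c d hcd
  refine Set.disjoint_left.mpr fun e ⟨hc, heW⟩ ⟨hd, _⟩ => hcd ?_
  have := componentVerts_subset c (a := G.src e)
  have := componentVerts_subset c (a := G.tgt e)
  have := componentVerts_subset d (a := G.src e)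
  have := componentVerts_subset d (a := G.tgt e)
  simp only [cut, Set.mem_ofPred_eq] at hc hd heW
  by_cases hs : G.src e ∈ W
  · exact eq_of_mem_componentVerts (v := G.src e) (by tauto) (by tauto)
  · exact eq_of_mem_componentVerts (v := G.tgt e) (by tauto) (by tauto)

end Induced

end Multigraph

/-- Let `G` be a 2-edge-connected multigraph and `H` a proper
induced subgraph (given by a proper vertex set `W`). Let `k` be the number of
edges of `G` adjacent to `H` but not contained in `H`. Then `#l(H^Br) ≤ k`. -/
theorem leaves_of_induced_le_boundary
    (G : Multigraph) (hG : G.TwoEdgeConnected) (W : Set G.V) (hW : W ≠ Set.univ) :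
    (G.induce W).Br.numLeaves ≤
      {e : G.E | (G.src e ∈ W ∨ G.tgt e ∈ W) ∧ ¬(G.src e ∈ W ∧ G.tgt e ∈ W)}.ncard := by
  have := Fintype.ofFinite (G.induce W).Br.V
  have hboundary : {e : G.E | (G.src e ∈ W ∨ G.tgt e ∈ W) ∧ ¬(G.src e ∈ W ∧ G.tgt e ∈ W)} =
      G.cut W := by
    ext
    simp only [Multigraph.cut, Set.mem_ofPred_eq]
    tauto
  rw [hboundary, Multigraph.numLeaves_eq_sum]
  calc ∑ c, (2 - (G.induce W).Br.degAt c)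
      ≤ ∑ c, (G.cut (G.componentVerts W c) ∩ G.cut W).ncard :=
        Finset.sum_le_sum fun c _ => Multigraph.two_sub_degAt_le_ncard_cut_inter hG hW c
    _ = (⋃ c, G.cut (G.componentVerts W c) ∩ G.cut W).ncard := by
        rw [Set.ncard_iUnion_of_finite (fun _ => Set.toFinite _)
          Multigraph.pairwise_disjoint_cut_componentVerts_inter, finsum_eq_sum_of_fintype]
    _ ≤ (G.cut W).ncard := Set.ncard_le_ncard (Set.iUnion_subset fun _ => Set.inter_subset_right)
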